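/- arXiv:2309.06087 — 7 statements merged into one kernel-verified Lean document; each statement's English description precedes it below -/
import Mathlib

section
/- Let n > c ≥ 4 and c ≥ s ≥ 3 be integers, write n - 1 = α(c-1) + p with α = ⌊(n-1)/(c-1)⌋ and 0 ≤ p ≤ c-2. Then max{C(c-1,s) + (n-c+1)·C(2,s-1), C(c+1-⌊c/2⌋,s) + (n-c-1+⌊c/2⌋)·C(⌊c/2⌋,s-1)} < α·C(c,s) + C(p+1,s). -/
/-!
Write `m` for `2` or `⌊c/2⌋`. Raising `α` by one adds `C(c, s)` to the right-hand side but only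
`(c - 1)·C(m, s-1) ≤ C(c, s)` to the left-hand side, so the case `α = 1` is the critical one.
There the difference of the two sides is a discretely convex function of `p`, by the tangent-line
bound for `x ↦ C(x, s)`, so it is smallest at `p = m - 1`. At that point the inequality is
elementary for `m = 2`, and for `m = ⌊c/2⌋` it follows from Pascal's rule and three terms of
Vandermonde's identity for `C(⌊c/2⌋ + ⌈c/2⌉, s)`.
-/

open Finset

namespace Nat

-- Discrete convexity of `x ↦ x.choose (k + 1)`: its tangent line at `a` lies below it.
theorem choose_succ_add_mul_choose_le (a b k : ℕ) :
    a.choose (k + 1) + b * a.choose k ≤ b.choose (k + 1) + a * a.choose k := by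
  rcases le_total a b with hab | hba
  · induction b, hab using Nat.le_induction with
    | base => rfl
    | succ b hab ih =>
      have := choose_le_choose k hab
      rw [choose_succ_succ']
      nlinarith
  · induction a, hba using Nat.le_induction with
    | base => rfl
    | succ a hba ih =>
      have := choose_le_succ a k
      rw [choose_succ_succ']
      nlinarith

-- The terms `(0, k + 1)`, `(1, k)`, `(k, 1)` of Vandermonde's identity, distinct as `2 ≤ k`.
theorem choose_add_mul_choose_add_choose_mul_le (a b : ℕ) {k : ℕ} (hk : 2 ≤ k) :
    b.choose (k + 1) + a * b.choose k + a.choose k * b ≤ (a + b).choose (k + 1) := by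
  rw [add_choose_eq]
  have hsub : ({(0, k + 1), (1, k), (k, 1)} : Finset (ℕ × ℕ)) ⊆ antidiagonal (k + 1) := by
    simp only [insert_subset_iff, singleton_subset_iff, HasAntidiagonal.mem_antidiagonal,
      and_true]
    omega
  have := sum_le_sum_of_subset (f := fun ij : ℕ × ℕ => a.choose ij.1 * b.choose ij.2) hsub
  rw [sum_insert (by simp only [mem_insert, mem_singleton, Prod.mk.injEq]; omega),
    sum_pair (by simp only [ne_eq, Prod.mk.injEq]; omega)] at this
  simpa [add_assoc] using this

theorem le_choose_two {n : ℕ} (hn : 3 ≤ n) : n ≤ n.choose 2 := by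
  obtain ⟨d, rfl⟩ := Nat.exists_eq_add_of_le' hn
  have := choose_pos (show 2 ≤ d + 2 by omega)
  rw [show (d + 3).choose 2 = (d + 2).choose 1 + (d + 2).choose 2 from choose_succ_succ' _ _,
    choose_one_right]
  omega

end Nat

open Nat

theorem choose_add_mul_choose_lt {n c α p m k : ℕ} (hdecomp : n - 1 = α * (c - 1) + p)
    (hα : 1 ≤ α) (hc : 0 < c) (hcn : c < n) (hm : 1 ≤ m)
    (hslope : (c - 1) * m.choose k ≤ c.choose (k + 1))
    (hmid : (c + 1 - m).choose (k + 1) + 2 * (m - 1) * m.choose k <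
      c.choose (k + 1) + m.choose (k + 1)) :
    (c + 1 - m).choose (k + 1) + (n - c - 1 + m) * m.choose k <
      α * c.choose (k + 1) + (p + 1).choose (k + 1) := by
  obtain ⟨β, rfl⟩ := Nat.exists_eq_add_of_le' hα
  obtain ⟨j, rfl⟩ := Nat.exists_eq_add_of_le' hm
  have hcoef : n - c - 1 + (j + 1) = β * (c - 1) + p + j := by
    rw [add_one_mul] at hdecomp; omega
  have htangent := choose_succ_add_mul_choose_le (j + 1) (p + 1) k
  rw [hcoef]
  rw [add_tsub_cancel_right] at hmid
  nlinarith [Nat.mul_le_mul_left β hslope]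

theorem mul_choose_two_le_choose {c k : ℕ} (hc : 4 ≤ c) (hk : 2 ≤ k) :
    (c - 1) * choose 2 k ≤ c.choose (k + 1) := by
  obtain rfl | hk := hk.eq_or_lt
  · obtain ⟨d, rfl⟩ : ∃ d, c = d + 1 := ⟨c - 1, by omega⟩
    have := le_choose_two (show 3 ≤ d by omega)
    rw [choose_succ_succ' d 2, choose_self, mul_one, add_tsub_cancel_right]
    omega
  · simp [choose_eq_zero_of_lt hk]

theorem choose_pred_add_two_mul_choose_two_lt {c k : ℕ} (hc : 4 ≤ c) (hk : 2 ≤ k)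
    (hkc : k + 1 ≤ c) :
    (c - 1).choose (k + 1) + 2 * choose 2 k < c.choose (k + 1) + choose 2 (k + 1) := by
  obtain ⟨d, rfl⟩ : ∃ d, c = d + 1 := ⟨c - 1, by omega⟩
  rw [choose_succ_succ', add_tsub_cancel_right, choose_eq_zero_of_lt (show 2 < k + 1 by omega)]
  obtain rfl | hk := hk.eq_or_lt
  · have := le_choose_two (show 3 ≤ d by omega)
    simp only [choose_self]
    omega
  · have := choose_pos (show k ≤ d by omega)
    rw [choose_eq_zero_of_lt hk, mul_zero, add_zero]
    omega

theorem mul_choose_half_le_choose {c k : ℕ} (hk : 2 ≤ k) :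
    (c - 1) * (c / 2).choose k ≤ c.choose (k + 1) := by
  have hvdm := choose_add_mul_choose_add_choose_mul_le (c / 2) (c / 2) hk
  calc (c - 1) * (c / 2).choose k ≤ c / 2 * (c / 2).choose k + (c / 2).choose k * (c / 2) := by
        rw [mul_comm ((c / 2).choose k), ← add_mul]
        exact Nat.mul_le_mul_right _ (by omega)
    _ ≤ (c / 2 + c / 2).choose (k + 1) := by omega
    _ ≤ c.choose (k + 1) := choose_le_choose _ (by omega)

theorem choose_succ_add_mul_choose_lt_choose_two_mul_add {m k : ℕ} (hk : 2 ≤ k)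
    (hkm : k + 1 ≤ 2 * m) :
    (m + 1).choose (k + 1) + 2 * (m - 1) * m.choose k <
      (2 * m).choose (k + 1) + m.choose (k + 1) := by
  have hvdm := choose_add_mul_choose_add_choose_mul_le m m hk
  rw [← two_mul] at hvdm
  rw [choose_succ_succ']
  obtain ⟨j, rfl⟩ : ∃ j, m = j + 2 := ⟨m - 2, by omega⟩
  rw [show j + 2 - 1 = j + 1 by omega]
  rcases Nat.eq_zero_or_pos ((j + 2).choose k) with h0 | hpos
  · have := choose_pos hkm
    simp only [h0, mul_zero]
    omega
  · nlinarith

theorem choose_add_two_add_mul_choose_lt_choose_two_mul_succ_add {m k : ℕ} (hm : 2 ≤ m)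
    (hk : 2 ≤ k) (hkm : k + 1 ≤ 2 * m + 1) :
    (m + 2).choose (k + 1) + 2 * (m - 1) * m.choose k <
      (2 * m + 1).choose (k + 1) + m.choose (k + 1) := by
  have hvdm := choose_add_mul_choose_add_choose_mul_le (m + 1) m hk
  rw [show m + 1 + m = 2 * m + 1 by ring] at hvdm
  rw [choose_succ_succ', choose_succ_succ' m k]
  have hle := choose_le_choose k (m.le_add_right 1)
  obtain ⟨j, rfl⟩ : ∃ j, m = j + 2 := ⟨m - 2, by omega⟩
  rw [show j + 2 - 1 = j + 1 by omega]
  rcases Nat.eq_zero_or_pos ((j + 2 + 1).choose k) with h0 | hpos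
  · have := choose_pos hkm
    have : (j + 2).choose k = 0 := by omega
    simp_all
  · nlinarith

theorem choose_add_mul_choose_half_lt {c k : ℕ} (hc : 4 ≤ c) (hk : 2 ≤ k) (hkc : k + 1 ≤ c) :
    (c + 1 - c / 2).choose (k + 1) + 2 * (c / 2 - 1) * (c / 2).choose k <
      c.choose (k + 1) + (c / 2).choose (k + 1) := by
  obtain ⟨m, rfl | rfl⟩ := Nat.even_or_odd' c
  · rw [show 2 * m + 1 - 2 * m / 2 = m + 1 by omega, show 2 * m / 2 = m by omega]
    exact choose_succ_add_mul_choose_lt_choose_two_mul_add hk hkc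
  · rw [show 2 * m + 1 + 1 - (2 * m + 1) / 2 = m + 2 by omega, show (2 * m + 1) / 2 = m by omega]
    exact choose_add_two_add_mul_choose_lt_choose_two_mul_succ_add (by omega) hk hkc

theorem max_f_lt_h_general (n c s α p : ℕ) (hc : 4 ≤ c) (hnc : c < n) (hs : 3 ≤ s) (hsc : s ≤ c)
    (hdecomp : n - 1 = α * (c - 1) + p) (hp : p ≤ c - 2) :
    max (Nat.choose (c - 1) s + (n - c + 1) * Nat.choose 2 (s - 1))
        (Nat.choose (c + 1 - c / 2) s + (n - c - 1 + c / 2) * Nat.choose (c / 2) (s - 1)) <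
      α * Nat.choose c s + Nat.choose (p + 1) s := by
  obtain ⟨k, rfl⟩ : ∃ k, s = k + 1 := ⟨s - 1, by omega⟩
  have hk : 2 ≤ k := by omega
  have hα : 1 ≤ α := by
    by_contra! h
    rw [lt_one_iff.mp h, zero_mul, zero_add] at hdecomp
    omega
  rw [add_tsub_cancel_right]
  refine max_lt ?_ ?_
  · have h := choose_add_mul_choose_lt (m := 2) hdecomp hα (by omega) hnc one_le_two
      (mul_choose_two_le_choose hc hk) (by simpa [show c + 1 - 2 = c - 1 by omega]
        using choose_pred_add_two_mul_choose_two_lt hc hk hsc)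
    rwa [show c + 1 - 2 = c - 1 by omega, show n - c - 1 + 2 = n - c + 1 by omega] at h
  · exact choose_add_mul_choose_lt hdecomp hα (by omega) hnc (by omega)
      (mul_choose_half_le_choose hk) (choose_add_mul_choose_half_lt hc hk hsc)

/-- Lemma 8 of the paper: for `n > c ≥ 4`, `c ≥ s ≥ 3`, writing `n - 1 = α(c-1) + p` with
`α = ⌊(n-1)/(c-1)⌋` and `0 ≤ p ≤ c-2`, we have
`max{f_s(n,c,2), f_s(n,c,⌊c/2⌋)} < h_s(n,c) = α·C(c,s) + C(p+1,s)`,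
where `f_s(n,c,k) = C(c+1-k,s) + (n-c-1+k)·C(k,s-1)`. -/
theorem max_f_lt_h (n c s α p : ℕ) (hc : 4 ≤ c) (hnc : c < n) (hs : 3 ≤ s) (hsc : s ≤ c)
    (hα : α = (n - 1) / (c - 1)) (hdecomp : n - 1 = α * (c - 1) + p) (hp : p ≤ c - 2) :
    max (Nat.choose (c - 1) s + (n - c + 1) * Nat.choose 2 (s - 1))
        (Nat.choose (c + 1 - c / 2) s + (n - c - 1 + c / 2) * Nat.choose (c / 2) (s - 1)) <
      α * Nat.choose c s + Nat.choose (p + 1) s :=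
  max_f_lt_h_general n c s α p hc hnc hs hsc hdecomp hp
end

section
/- Let n > c ≥ 4 and c ≥ s ≥ 3 be integers, write n - 1 = α(c-1) + p with α = ⌊(n-1)/(c-1)⌋ and 0 ≤ p ≤ c-2. Then C(c-1,s) + (n-c+1)·C(2,s-1) < α·C(c,s) + C(p+1,s). -/
/-!
Write `c = m + 1` and `α = β + 1` (`α ≥ 1` since `p < c - 1 < n - 1`), so that
`n - c + 1 = β m + (p + 1)`. For `s ≥ 4` the factor `C(2, s-1)` vanishes and Pascal's rule gives
`C(m, s) < C(m+1, s) ≤ α C(m+1, s)`. For `s = 3`, Pascal's rule `C(m+1, 3) = C(m, 2) + C(m, 3)`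
reduces the claim to `β m ≤ β C(m+1, 3)` and `p + 1 < C(m, 2) + C(p+1, 3)`; the latter holds
because `m ≤ C(m, 2)` for `m ≥ 3`, with `C(p+1, 3) ≥ 1` covering the extreme case `p + 1 = m`.
-/

namespace Nat

theorem le_choose_two_s8 {m : ℕ} (hm : 3 ≤ m) : m ≤ m.choose 2 := by
  rw [choose_two_right, Nat.le_div_iff_mul_le two_pos]
  exact Nat.mul_le_mul_left m (by omega)

theorem lt_choose_two_add_choose_three {m q : ℕ} (hm : 3 ≤ m) (hq : q ≤ m) :
    q < m.choose 2 + q.choose 3 := by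
  have hm2 := le_choose_two_s8 hm
  rcases hq.lt_or_eq with hq | rfl
  · omega
  · have := choose_pos hm
    omega

theorem choose_lt_choose_succ {m t : ℕ} (h : t ≤ m) : m.choose (t + 1) < (m + 1).choose (t + 1) := by
  rw [choose_succ_succ']
  exact Nat.lt_add_of_pos_left (choose_pos h)

theorem choose_three_add_lt {m q β : ℕ} (hm : 3 ≤ m) (hq : q ≤ m) :
    m.choose 3 + (β * m + q) < (β + 1) * (m + 1).choose 3 + q.choose 3 := by
  have hpascal : (m + 1).choose 3 = m.choose 2 + m.choose 3 := choose_succ_succ' m 2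
  have hq' := lt_choose_two_add_choose_three hm hq
  have hβ : β * m ≤ β * (m + 1).choose 3 :=
    Nat.mul_le_mul_left β ((le_choose_two_s8 hm).trans (hpascal ▸ Nat.le_add_right _ _))
  rw [hpascal] at hβ ⊢
  nlinarith

end Nat

theorem f2_lt_h_general (n c s α p : ℕ) (hc : 4 ≤ c) (hnc : c < n) (hs : 3 ≤ s) (hsc : s ≤ c)
    (hdecomp : n - 1 = α * (c - 1) + p) (hp : p ≤ c - 2) :
    Nat.choose (c - 1) s + (n - c + 1) * Nat.choose 2 (s - 1) <
      α * Nat.choose c s + Nat.choose (p + 1) s := by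
  obtain ⟨m, rfl⟩ : ∃ m, c = m + 1 := ⟨c - 1, by omega⟩
  obtain ⟨β, rfl⟩ : ∃ β, α = β + 1 := ⟨α - 1, by rcases α with _ | _ <;> omega⟩
  rw [Nat.add_sub_cancel, add_mul, one_mul] at hdecomp
  have hn : n - (m + 1) + 1 = β * m + (p + 1) := by omega
  rw [Nat.add_sub_cancel, hn]
  obtain ⟨t, rfl⟩ : ∃ t, s = t + 1 := ⟨s - 1, by omega⟩
  rw [Nat.add_sub_cancel]
  rcases (show 2 ≤ t by omega).eq_or_lt with rfl | ht
  · simpa using Nat.choose_three_add_lt (β := β) (by omega : 3 ≤ m) (by omega : p + 1 ≤ m)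
  · rw [Nat.choose_eq_zero_of_lt ht, mul_zero, add_zero]
    calc m.choose (t + 1) < (m + 1).choose (t + 1) := Nat.choose_lt_choose_succ (by omega)
      _ ≤ (β + 1) * (m + 1).choose (t + 1) := Nat.le_mul_of_pos_left _ β.succ_pos
      _ ≤ _ := Nat.le_add_right _ _

/-- First part of the proof of Lemma 8: for `n > c ≥ 4`, `c ≥ s ≥ 3`, writing
`n - 1 = α(c-1) + p` with `α = ⌊(n-1)/(c-1)⌋` and `0 ≤ p ≤ c-2`, we have
`f_s(n,c,2) = C(c-1,s) + (n-c+1)·C(2,s-1) < α·C(c,s) + C(p+1,s) = h_s(n,c)`. -/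
theorem f2_lt_h (n c s α p : ℕ) (hc : 4 ≤ c) (hnc : c < n) (hs : 3 ≤ s) (hsc : s ≤ c)
    (hα : α = (n - 1) / (c - 1)) (hdecomp : n - 1 = α * (c - 1) + p) (hp : p ≤ c - 2) :
    Nat.choose (c - 1) s + (n - c + 1) * Nat.choose 2 (s - 1) <
      α * Nat.choose c s + Nat.choose (p + 1) s :=
  f2_lt_h_general n c s α p hc hnc hs hsc hdecomp hp
end

section
/- Let t and s be integers with t ≥ 2 and 3 ≤ s ≤ 2t. Then C(t,s) + (2t-1)·C(t,s-1) < C(2t,s). -/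
/-!
By Vandermonde, `C(m + n, s) = ∑_{i + j = s} C(m, i) C(n, j)`. For `s ≥ 3` the four terms with
`i ∈ {0, 1, s - 1, s}` are distinct, so with `m = n = t` they already give
`C(2t, s) ≥ 2 C(t, s) + 2t C(t, s - 1)`, which beats the left-hand side as soon as
`C(t, s - 1) > 0`; otherwise the left-hand side vanishes.
-/

open Finset

theorem Nat.choose_add_choose_add_mul_choose_pred_le {s : ℕ} (hs : 3 ≤ s) (m n : ℕ) :
    m.choose s + n.choose s + (n * m.choose (s - 1) + m * n.choose (s - 1)) ≤
      (m + n).choose s := by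
  let boundary : Finset (ℕ × ℕ) := {(s, 0), (0, s), (s - 1, 1), (1, s - 1)}
  have h_sub : boundary ⊆ antidiagonal s := by
    intro p hp
    simp only [boundary, mem_insert, mem_singleton] at hp
    rcases hp with rfl | rfl | rfl | rfl <;> simp only [HasAntidiagonal.mem_antidiagonal] <;> omega
  have h_sum : ∑ p ∈ boundary, m.choose p.1 * n.choose p.2 =
      m.choose s + n.choose s + (n * m.choose (s - 1) + m * n.choose (s - 1)) := by
    rw [sum_insert (by simp only [mem_insert, mem_singleton, Prod.mk.injEq]; omega),
      sum_insert (by simp only [mem_insert, mem_singleton, Prod.mk.injEq]; omega),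
      sum_pair (by simp only [ne_eq, Prod.mk.injEq]; omega)]
    simp only [choose_zero_right, choose_one_right]
    ring
  rw [add_choose_eq, ← h_sum]
  exact sum_le_sum_of_subset h_sub

theorem clique_ineq_even_general (t s : ℕ) (hs : 3 ≤ s) (hs' : s ≤ 2 * t) :
    Nat.choose t s + (2 * t - 1) * Nat.choose t (s - 1) < Nat.choose (2 * t) s := by
  have h_vandermonde : 2 * t.choose s + 2 * t * t.choose (s - 1) ≤ (2 * t).choose s := by
    have := Nat.choose_add_choose_add_mul_choose_pred_le hs t t
    rw [two_mul t]
    linarith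
  rcases Nat.eq_zero_or_pos (t.choose (s - 1)) with h_zero | h_pos
  · have h_top : t.choose s = 0 := Nat.choose_eq_zero_of_lt (by
      have := Nat.choose_eq_zero_iff.mp h_zero; omega)
    simpa [h_zero, h_top] using Nat.choose_pos hs'
  · have h_lt : (2 * t - 1) * t.choose (s - 1) < 2 * t * t.choose (s - 1) :=
      Nat.mul_lt_mul_of_pos_right (by omega) h_pos
    omega

/-- Inequality (1) in the proof of Lemma 8: for integers `t ≥ 2` and `3 ≤ s ≤ 2t`,
`C(t,s) + (2t-1)·C(t,s-1) < C(2t,s)`. -/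
theorem clique_ineq_even (t s : ℕ) (ht : 2 ≤ t) (hs : 3 ≤ s) (hs' : s ≤ 2 * t) :
    Nat.choose t s + (2 * t - 1) * Nat.choose t (s - 1) < Nat.choose (2 * t) s :=
  clique_ineq_even_general t s hs hs'
end

section
/- Let t and s be integers with t ≥ 2 and 3 ≤ s ≤ 2t+1. Then C(t+2,s) + 2t·C(t,s-1) < C(2t+1,s). -/
/-!
Split `2t+1 = t + (t+1)`. Vandermonde's identity, truncated to its first three terms, gives
`C(2t+1,s) ≥ C(t,s) + (t+1)·C(t,s-1) + C(t+1,2)·C(t,s-2)`, while Pascal's rule expands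
`C(t+2,s) = C(t,s-2) + 2·C(t,s-1) + C(t,s)`. Comparing, it remains to show
`C(t,s-2) + (t+1)·C(t,s-1) < C(t+1,2)·C(t,s-2)`, which follows from the ratio bound
`2·C(t,s-1) ≤ (t-1)·C(t,s-2)` (valid as `s ≥ 3`) as soon as `C(t,s-2) > 0`.
When `C(t,s-2) = 0`, i.e. `s > t+2`, the left-hand side vanishes.
-/

open Finset

theorem Nat.choose_add_choose_two_le (m n k : ℕ) :
    m.choose (k + 2) + n * m.choose (k + 1) + n.choose 2 * m.choose k
      ≤ (n + m).choose (k + 2) := by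
  rw [Nat.add_choose_eq, Nat.sum_antidiagonal_eq_sum_range_succ
    (fun i j => n.choose i * m.choose j)]
  calc _ = ∑ i ∈ range 3, n.choose i * m.choose (k + 2 - i) := by simp [sum_range_succ]
    _ ≤ _ := sum_le_sum_of_subset (range_subset_range.2 (by omega))

theorem Nat.two_mul_choose_succ_succ_le (n k : ℕ) :
    2 * n.choose (k + 2) ≤ (n - 1) * n.choose (k + 1) :=
  calc 2 * n.choose (k + 2) ≤ n.choose (k + 2) * (k + 2) := by rw [mul_comm]; gcongr; omega
    _ = n.choose (k + 1) * (n - (k + 1)) := Nat.choose_succ_right_eq n (k + 1)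
    _ ≤ (n - 1) * n.choose (k + 1) := by rw [mul_comm]; gcongr; omega

theorem choose_add_two_add_lt_choose_two_mul_add_one {t k : ℕ} (ht : 2 ≤ t) (hk : k + 1 ≤ t) :
    (t + 2).choose (k + 3) + 2 * t * t.choose (k + 2) < (2 * t + 1).choose (k + 3) := by
  have hpascal : (t + 2).choose (k + 3)
      = t.choose (k + 1) + 2 * t.choose (k + 2) + t.choose (k + 3) := by
    simp only [Nat.choose_succ_succ', ← add_assoc]; ring
  have hvand :
      t.choose (k + 3) + (t + 1) * t.choose (k + 2) + (t + 1).choose 2 * t.choose (k + 1) ≤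
        (2 * t + 1).choose (k + 3) := by
    simpa [two_mul, add_right_comm t t 1] using Nat.choose_add_choose_two_le t (t + 1) (k + 1)
  have key :
      t.choose (k + 1) + (t + 1) * t.choose (k + 2) < (t + 1).choose 2 * t.choose (k + 1) := by
    have hpos : 0 < t.choose (k + 1) := Nat.choose_pos hk
    have hratio := Nat.two_mul_choose_succ_succ_le t k
    have hpair : (t + 1).choose 2 * 2 = (t + 1) * t := by
      simpa using (Nat.add_one_mul_choose_eq t 1).symm
    obtain ⟨u, rfl⟩ : ∃ u, t = u + 2 := ⟨t - 2, by omega⟩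
    simp only [show u + 2 - 1 = u + 1 by omega] at hratio
    nlinarith
  rw [hpascal]; linarith

/-- Inequality (3) in the proof of Lemma 8: for integers `t ≥ 2` and `3 ≤ s ≤ 2t+1`,
`C(t+2,s) + 2t·C(t,s-1) < C(2t+1,s)`. -/
theorem clique_ineq_odd (t s : ℕ) (ht : 2 ≤ t) (hs : 3 ≤ s) (hs' : s ≤ 2 * t + 1) :
    Nat.choose (t + 2) s + 2 * t * Nat.choose t (s - 1) < Nat.choose (2 * t + 1) s := by
  rcases le_or_gt s (t + 2) with hst | hst
  · obtain ⟨k, rfl⟩ : ∃ k, s = k + 3 := ⟨s - 3, by omega⟩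
    exact choose_add_two_add_lt_choose_two_mul_add_one ht (by omega)
  · rw [Nat.choose_eq_zero_of_lt hst, Nat.choose_eq_zero_of_lt (by omega : t < s - 1)]
    simpa using Nat.choose_pos hs'
end

section
/- Let n > c ≥ 4 and c ≥ s ≥ 3 be integers, write n - 1 = α(c-1) + p with α = ⌊(n-1)/(c-1)⌋ and 0 ≤ p ≤ c-2. Then C(c+1-⌊c/2⌋,s) + (n-c-1+⌊c/2⌋)·C(⌊c/2⌋,s-1) < α·C(c,s) + C(p+1,s). -/
/-!
Write `c = m + k` with `k = ⌊c/2⌋ ≤ m` and put `X = C(k, s-1)`; then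
`n - c - 1 + k = (α-1)(c-1) + (p + k - 1)`. The four extreme terms of Vandermonde's sum for
`C(m+k, s)` give `c X ≤ C(c, s)`, which absorbs the `(α-1)(c-1)` copies of `X` into
`(α-1) C(c, s)`, and `C(m+1, s) + (2k-1) X ≤ C(c, s)`. The remaining `(p + 1 - k) X` is at most
`C(p+1, s) - C(k, s)` by discrete convexity of `x ↦ C(x, s)` (its increments `C(x, s-1)` grow
with `x`). Altogether the left-hand side plus `X` is at most the right-hand side; if `X = 0`,
strictness comes from `C(m+1, s) < C(c, s)` instead.
-/

namespace Nat

theorem choose_lt_choose_of_lt {a b s : ℕ} (hs : 1 ≤ s) (hsb : s ≤ b) (hab : a < b) :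
    a.choose s < b.choose s := by
  obtain ⟨b, rfl⟩ : ∃ b', b = b' + 1 := ⟨b - 1, by omega⟩
  obtain ⟨t, rfl⟩ : ∃ t, s = t + 1 := ⟨s - 1, by omega⟩
  have hpos : 0 < b.choose t := choose_pos (by omega)
  have hmono : a.choose (t + 1) ≤ b.choose (t + 1) := choose_le_choose _ (by omega)
  rw [choose_succ_succ']
  omega

theorem mul_choose_add_choose_succ_le_choose_succ_add (s k d : ℕ) :
    d * k.choose s + k.choose (s + 1) ≤ (k + d).choose (s + 1) := by
  induction d with
  | zero => simp
  | succ d ih =>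
    have hmono : k.choose s ≤ (k + d).choose s := choose_le_choose s (le_add_right k d)
    rw [← add_assoc, choose_succ_succ', add_one_mul]
    omega

theorem choose_succ_add_le_mul_choose_add_choose_succ (s j d : ℕ) :
    (j + d).choose (s + 1) ≤ d * (j + d).choose s + j.choose (s + 1) := by
  induction d with
  | zero => simp
  | succ d ih =>
    have hmono : (j + d).choose s ≤ (j + d + 1).choose s := choose_le_choose s (le_succ _)
    have := Nat.mul_le_mul_left d hmono
    rw [← add_assoc, choose_succ_succ', add_one_mul]
    omega

theorem sub_mul_choose_add_choose_succ_le_choose_succ (s a b : ℕ) :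
    ((b : ℤ) - a) * a.choose s + a.choose (s + 1) ≤ b.choose (s + 1) := by
  rcases le_total a b with hab | hba
  · obtain ⟨d, rfl⟩ := exists_add_of_le hab
    have := mul_choose_add_choose_succ_le_choose_succ_add s a d
    zify at this
    push_cast
    linarith
  · obtain ⟨d, rfl⟩ := exists_add_of_le hba
    have := choose_succ_add_le_mul_choose_add_choose_succ s b d
    zify at this
    push_cast
    linarith

open Finset in
theorem vandermonde_extreme_terms_le_choose_add (m k s : ℕ) (hs : 3 ≤ s) :
    m.choose s + k * m.choose (s - 1) + m * k.choose (s - 1) + k.choose s ≤ (m + k).choose s := by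
  have hsub : ({(s, 0), (s - 1, 1), (1, s - 1), (0, s)} : Finset (ℕ × ℕ)) ⊆ antidiagonal s := by
    simp only [insert_subset_iff, singleton_subset_iff, HasAntidiagonal.mem_antidiagonal]
    omega
  rw [add_choose_eq]
  refine le_trans (le_of_eq ?_) (sum_le_sum_of_subset hsub)
  rw [sum_insert (by simp; omega), sum_insert (by simp; omega), sum_insert (by simp),
    sum_singleton]
  simp only [choose_zero_right, choose_one_right]
  ring

theorem add_mul_choose_sub_one_le_choose_add {m k s : ℕ} (hkm : k ≤ m) (hs : 3 ≤ s) :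
    (m + k) * k.choose (s - 1) ≤ (m + k).choose s := by
  have hvdm := vandermonde_extreme_terms_le_choose_add m k s hs
  have hmono := Nat.mul_le_mul_left k (choose_le_choose (s - 1) hkm)
  rw [add_mul]
  omega

theorem choose_succ_add_mul_choose_sub_one_add_choose_le_choose_add {m k s : ℕ} (hk : 1 ≤ k)
    (hkm : k ≤ m) (hs : 3 ≤ s) :
    (m + 1).choose s + (2 * k - 1) * k.choose (s - 1) + k.choose s ≤ (m + k).choose s := by
  have hvdm := vandermonde_extreme_terms_le_choose_add m k s hs
  obtain ⟨t, rfl⟩ : ∃ t, s = t + 1 := ⟨s - 1, by omega⟩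
  obtain ⟨j, rfl⟩ : ∃ j, k = j + 1 := ⟨k - 1, by omega⟩
  have hmono : (j + 1).choose t ≤ m.choose t := choose_le_choose t hkm
  have := Nat.mul_le_mul_left j hmono
  have := Nat.mul_le_mul_right ((j + 1).choose t) hkm
  rw [choose_succ_succ', show 2 * (j + 1) - 1 = j + (j + 1) by omega]
  simp only [add_tsub_cancel_right] at hvdm ⊢
  linarith

theorem choose_succ_add_mul_choose_sub_one_lt {m k α p s : ℕ} (hk : 2 ≤ k) (hkm : k ≤ m)
    (hs : 3 ≤ s) (hsc : s ≤ m + k) (hα : 1 ≤ α) :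
    (m + 1).choose s + ((α - 1) * (m + k - 1) + (p + k - 1)) * k.choose (s - 1) <
      α * (m + k).choose s + (p + 1).choose s := by
  set X := k.choose (s - 1)
  have hbound : (m + 1).choose s + ((α - 1) * (m + k - 1) + (p + k - 1)) * X + X ≤
      α * (m + k).choose s + (p + 1).choose s := by
    obtain ⟨a, rfl⟩ : ∃ a, α = a + 1 := ⟨α - 1, by omega⟩
    have hbulk : a * ((m + k - 1) * X) ≤ a * (m + k).choose s :=
      Nat.mul_le_mul_left _ ((Nat.mul_le_mul_right _ (sub_le _ _)).trans
        (add_mul_choose_sub_one_le_choose_add hkm hs))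
    have hhead := choose_succ_add_mul_choose_sub_one_add_choose_le_choose_add (by omega) hkm hs
    have htail := sub_mul_choose_add_choose_succ_le_choose_succ (s - 1) k (p + 1)
    rw [Nat.sub_add_cancel (by omega)] at htail
    zify [show 1 ≤ m + k by omega, show 1 ≤ p + k by omega, show 1 ≤ 2 * k by omega]
      at hbulk hhead ⊢
    push_cast at htail ⊢
    linarith [(k.choose s).cast_nonneg (α := ℤ)]
  rcases Nat.eq_zero_or_pos X with hX | hX
  · have hlt : (m + 1).choose s < (m + k).choose s :=
      choose_lt_choose_of_lt (by omega) hsc (by omega)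
    have := Nat.le_mul_of_pos_left ((m + k).choose s) hα
    rw [hX, mul_zero, add_zero]
    omega
  · omega

end Nat

theorem fhalf_lt_h_general (n c s α p : ℕ) (hc : 4 ≤ c) (hnc : c < n) (hs : 3 ≤ s) (hsc : s ≤ c)
    (hdecomp : n - 1 = α * (c - 1) + p) (hp : p ≤ c - 2) :
    Nat.choose (c + 1 - c / 2) s + (n - c - 1 + c / 2) * Nat.choose (c / 2) (s - 1) <
      α * Nat.choose c s + Nat.choose (p + 1) s := by
  have hα : 1 ≤ α := Nat.pos_of_ne_zero (by rintro rfl; omega)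
  have key := Nat.choose_succ_add_mul_choose_sub_one_lt (m := c - c / 2) (k := c / 2) (p := p)
    (by omega) (by omega) hs (by omega) hα
  have hsplit : c - c / 2 + c / 2 = c := Nat.sub_add_cancel (Nat.div_le_self c 2)
  have hcoeff : n - c - 1 + c / 2 = (α - 1) * (c - 1) + (p + c / 2 - 1) := by
    have : c - 1 ≤ α * (c - 1) := Nat.le_mul_of_pos_left _ hα
    rw [Nat.sub_one_mul]
    omega
  rwa [hsplit, ← hcoeff, show c - c / 2 + 1 = c + 1 - c / 2 by omega] at key

/-- Second part of the proof of Lemma 8: for `n > c ≥ 4`, `c ≥ s ≥ 3`, writing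
`n - 1 = α(c-1) + p` with `α = ⌊(n-1)/(c-1)⌋` and `0 ≤ p ≤ c-2`, we have
`f_s(n,c,⌊c/2⌋) = C(c+1-⌊c/2⌋,s) + (n-c-1+⌊c/2⌋)·C(⌊c/2⌋,s-1) < α·C(c,s) + C(p+1,s) = h_s(n,c)`. -/
theorem fhalf_lt_h (n c s α p : ℕ) (hc : 4 ≤ c) (hnc : c < n) (hs : 3 ≤ s) (hsc : s ≤ c)
    (hα : α = (n - 1) / (c - 1)) (hdecomp : n - 1 = α * (c - 1) + p) (hp : p ≤ c - 2) :
    Nat.choose (c + 1 - c / 2) s + (n - c - 1 + c / 2) * Nat.choose (c / 2) (s - 1) <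
      α * Nat.choose c s + Nat.choose (p + 1) s :=
  fhalf_lt_h_general n c s α p hc hnc hs hsc hdecomp hp
end

section
/- Let s ≥ 3 and c ≥ 3 be integers and let p₁, p₂ be integers with 0 ≤ p₁ ≤ c-2, 0 ≤ p₂ ≤ c-2 and c-1 ≤ p₁+p₂. Then C(p₁+1,s) + C(p₂+1,s) ≤ C(c,s) + C(p₁+p₂-c+2,s). -/
/-!
`n ↦ C(n, s)` is convex: its increments `C(n + 1, s) - C(n, s) = C(n, s - 1)` are monotone
in `n`. Hence moving two arguments with a fixed sum further apart can only increase
`C(u, s) + C(v, s)`; the theorem spreads `(p₁ + 1, p₂ + 1)` out to `(p₁ + p₂ + 2 - c, c)`.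
-/

namespace Nat

theorem choose_succ_add_choose_le {a b : ℕ} (s : ℕ) (hab : a ≤ b) :
    (a + 1).choose s + b.choose s ≤ a.choose s + (b + 1).choose s := by
  cases s with
  | zero => simp
  | succ s =>
    rw [choose_succ_succ', choose_succ_succ' b]
    have := choose_le_choose s hab
    omega

theorem choose_add_add_choose_le {x v : ℕ} (s k : ℕ) (hxv : x ≤ v) :
    (x + k).choose s + v.choose s ≤ x.choose s + (v + k).choose s := by
  induction k with
  | zero => rfl
  | succ k ih =>
    have := choose_succ_add_choose_le s (Nat.add_le_add_right hxv k)
    rw [← add_assoc, ← add_assoc]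
    omega

theorem choose_add_choose_le_of_add_eq {u v x y : ℕ} (s : ℕ) (hu : u ≤ y) (hv : v ≤ y)
    (hsum : u + v = x + y) :
    u.choose s + v.choose s ≤ x.choose s + y.choose s := by
  obtain ⟨k, rfl⟩ : ∃ k, y = v + k := ⟨y - v, by omega⟩
  obtain rfl : u = x + k := by omega
  exact choose_add_add_choose_le s k (by omega)

end Nat

theorem choose_ineq_second_case_general (s c p₁ p₂ : ℕ) (hc : 3 ≤ c)
    (hp₁ : p₁ ≤ c - 2) (hp₂ : p₂ ≤ c - 2) (hsum : c - 1 ≤ p₁ + p₂) :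
    Nat.choose (p₁ + 1) s + Nat.choose (p₂ + 1) s ≤
      Nat.choose c s + Nat.choose (p₁ + p₂ + 2 - c) s := by
  rw [add_comm (c.choose s)]
  exact Nat.choose_add_choose_le_of_add_eq s (by omega) (by omega) (by omega)

/-- Second case of the binomial inequality used in the proof of Theorem 5:
for `s ≥ 3`, `c ≥ 3`, `0 ≤ p₁, p₂ ≤ c-2` and `c-1 ≤ p₁+p₂`,
`C(p₁+1,s) + C(p₂+1,s) ≤ C(c,s) + C(p₁+p₂-c+2,s)`. -/
theorem choose_ineq_second_case (s c p₁ p₂ : ℕ) (hs : 3 ≤ s) (hc : 3 ≤ c)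
    (hp₁ : p₁ ≤ c - 2) (hp₂ : p₂ ≤ c - 2) (hsum : c - 1 ≤ p₁ + p₂) :
    Nat.choose (p₁ + 1) s + Nat.choose (p₂ + 1) s ≤
      Nat.choose c s + Nat.choose (p₁ + p₂ + 2 - c) s :=
  choose_ineq_second_case_general s c p₁ p₂ hc hp₁ hp₂ hsum
end

section
/- Let s ≥ 3 and k ≥ 4 be integers and let q₁, q₂ be integers with 0 ≤ q₁ ≤ k-3, 0 ≤ q₂ ≤ k-3 and k-2 ≤ q₁+q₂. Then C(q₁+2,s) + C(q₂+2,s) ≤ C(k,s) + C(q₁+q₂-k+4,s). -/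
/-! The map `x ↦ C(x, n)` is discretely convex: for `n = m + 1` its increments
`C(x + 1, n) - C(x, n) = C(x, m)` grow with `x`. With `t = k - (q₂ + 2)`, the theorem compares the
two pairs `q₁ + q₂ + 4 - k ≤ q₂ + 2` and `q₁ + 2, k`, obtained from each other by shifting by `t`. -/

theorem Nat.choose_add_add_choose_le_s16 {a b : ℕ} (hab : a ≤ b) (t n : ℕ) :
    (a + t).choose n + b.choose n ≤ a.choose n + (b + t).choose n := by
  cases n with
  | zero => simp
  | succ m =>
    induction t with
    | zero => rfl
    | succ t ih =>
      have hincr : (a + t).choose m ≤ (b + t).choose m := Nat.choose_le_choose m (by omega)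
      rw [← add_assoc, ← add_assoc, Nat.choose_succ_succ', Nat.choose_succ_succ']
      omega

theorem choose_ineq_second_case_two_general (s k q₁ q₂ : ℕ) (hk : 4 ≤ k)
    (hq₁ : q₁ ≤ k - 3) (hq₂ : q₂ ≤ k - 3) (hsum : k - 2 ≤ q₁ + q₂) :
    Nat.choose (q₁ + 2) s + Nat.choose (q₂ + 2) s ≤
      Nat.choose k s + Nat.choose (q₁ + q₂ + 4 - k) s := by
  have key := Nat.choose_add_add_choose_le_s16 (a := q₁ + q₂ + 4 - k) (b := q₂ + 2) (by omega)
    (k - (q₂ + 2)) s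
  rw [show q₁ + q₂ + 4 - k + (k - (q₂ + 2)) = q₁ + 2 by omega,
    show q₂ + 2 + (k - (q₂ + 2)) = k by omega] at key
  omega

/-- Second case of the binomial inequality used in Case 1 of the proof of Theorem 6:
for `s ≥ 3`, `k ≥ 4`, `0 ≤ q₁, q₂ ≤ k-3` and `k-2 ≤ q₁+q₂`,
`C(q₁+2,s) + C(q₂+2,s) ≤ C(k,s) + C(q₁+q₂-k+4,s)`. -/
theorem choose_ineq_second_case_two (s k q₁ q₂ : ℕ) (hs : 3 ≤ s) (hk : 4 ≤ k)
    (hq₁ : q₁ ≤ k - 3) (hq₂ : q₂ ≤ k - 3) (hsum : k - 2 ≤ q₁ + q₂) :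
    Nat.choose (q₁ + 2) s + Nat.choose (q₂ + 2) s ≤
      Nat.choose k s + Nat.choose (q₁ + q₂ + 4 - k) s :=
  choose_ineq_second_case_two_general s k q₁ q₂ hk hq₁ hq₂ hsum
end
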